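/- arXiv:1907.08306 — 2 statements merged into one kernel-verified Lean document; each statement's English description precedes it below -/
import Mathlib

section
/- Let p and p̃ be probability densities on ℝ^d, α, α̃ ∈ (0,1] with α ≥ 1/2, and suppose r : ℝ^d → [0,1], a proposal density g̃ with p/α = ĝ·r and p̃/α̃ = g̃·r for densities ĝ, g̃ satisfying ‖ĝ - g̃‖₁ ≤ ε. Then |α - α̃| ≤ ε and ‖p̃ - p‖₁ ≤ 3ε. -/
open MeasureTheory

theorem stmt15 (d : ℕ) (p ptilde ghat gtilde : (Fin d → ℝ) → ℝ)
    (r : (Fin d → ℝ) → ℝ) (α αtilde ε : ℝ)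
    (hp_nonneg : ∀ x, 0 ≤ p x) (hpt_nonneg : ∀ x, 0 ≤ ptilde x)
    (hgh_nonneg : ∀ x, 0 ≤ ghat x) (hgt_nonneg : ∀ x, 0 ≤ gtilde x)
    (hr : ∀ x, r x ∈ Set.Icc (0 : ℝ) 1) (hr_meas : Measurable r)
    (hp_int : Integrable p) (hpt_int : Integrable ptilde)
    (hgh_int : Integrable ghat) (hgt_int : Integrable gtilde)
    (hp_dens : ∫ x, p x = 1) (hpt_dens : ∫ x, ptilde x = 1)
    (hgh_dens : ∫ x, ghat x = 1) (hgt_dens : ∫ x, gtilde x = 1)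
    (hα : α = ∫ x, ghat x * r x) (hαt : αtilde = ∫ x, gtilde x * r x)
    (hα_half : (1 / 2 : ℝ) ≤ α)
    (hα_mem : α ∈ Set.Ioc (0 : ℝ) 1) (hαt_mem : αtilde ∈ Set.Ioc (0 : ℝ) 1)
    (hp : ∀ x, p x = ghat x * r x / α)
    (hpt : ∀ x, ptilde x = gtilde x * r x / αtilde)
    (hε : (∫ x, |ghat x - gtilde x|) ≤ ε) :
    |α - αtilde| ≤ ε ∧ (∫ x, |ptilde x - p x|) ≤ 3 * ε := by
  have hα0 : (0:ℝ) < α := hα_mem.1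
  have hαt0 : (0:ℝ) < αtilde := hαt_mem.1
  have hf_int : Integrable (fun x => ghat x - gtilde x) := hgh_int.sub hgt_int
  have hfabs_int : Integrable (fun x => |ghat x - gtilde x|) := hf_int.abs
  have hD0 : 0 ≤ ∫ x, |ghat x - gtilde x| := integral_nonneg (fun x => abs_nonneg _)
  have hε0 : 0 ≤ ε := le_trans hD0 hε
  have hgr_eq : (fun x => ghat x * r x) = fun x => α * p x := by
    funext x; rw [hp x]; field_simp
  have hgr_int : Integrable (fun x => ghat x * r x) := by
    rw [hgr_eq]; exact hp_int.const_mul α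
  have hgtr_eq : (fun x => gtilde x * r x) = fun x => αtilde * ptilde x := by
    funext x; rw [hpt x]; field_simp
  have hgtr_int : Integrable (fun x => gtilde x * r x) := by
    rw [hgtr_eq]; exact hpt_int.const_mul αtilde
  have hf_zero : (∫ x, (ghat x - gtilde x)) = 0 := by
    rw [integral_sub hgh_int hgt_int, hgh_dens, hgt_dens]; ring
  have h12 : Integrable (fun x => ghat x * r x - gtilde x * r x) := hgr_int.sub hgtr_int
  have heq : (fun x => (ghat x - gtilde x) * (r x - 1/2))
      = fun x => (ghat x * r x - gtilde x * r x) - (ghat x - gtilde x) * (1/2) := by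
    funext x; ring
  have hprod_int : Integrable (fun x => (ghat x - gtilde x) * (r x - 1/2)) := by
    rw [heq]; exact h12.sub (hf_int.mul_const _)
  have hkey : α - αtilde = ∫ x, (ghat x - gtilde x) * (r x - 1/2) := by
    rw [heq, integral_sub h12 (hf_int.mul_const _),
      integral_sub hgr_int hgtr_int, integral_mul_const, hf_zero, hα, hαt]
    ring
  have hδ : |α - αtilde| ≤ ε / 2 := by
    rw [hkey]
    have habs : |∫ x, (ghat x - gtilde x) * (r x - 1/2)|
        ≤ ∫ x, |(ghat x - gtilde x) * (r x - 1/2)| := by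
      simpa only [Real.norm_eq_abs] using
        norm_integral_le_integral_norm (μ := volume)
          (fun x => (ghat x - gtilde x) * (r x - 1/2))
    calc |∫ x, (ghat x - gtilde x) * (r x - 1/2)|
        ≤ ∫ x, |(ghat x - gtilde x) * (r x - 1/2)| := habs
      _ ≤ ∫ x, |ghat x - gtilde x| * (1/2) := by
          apply integral_mono hprod_int.abs (hfabs_int.mul_const _)
          intro x
          dsimp only
          rw [abs_mul]
          apply mul_le_mul_of_nonneg_left _ (abs_nonneg _)
          rcases hr x with ⟨h0, h1⟩
          rw [abs_le]; constructor <;> linarith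
      _ = (∫ x, |ghat x - gtilde x|) * (1/2) := integral_mul_const _ _
      _ ≤ ε / 2 := by linarith
  refine ⟨by linarith [abs_nonneg (α - αtilde)], ?_⟩
  have hbound : ∀ x, |ptilde x - p x|
      ≤ (|ghat x - gtilde x| + ptilde x * |α - αtilde|) / α := by
    intro x
    have hkey2 : α * (ptilde x - p x)
        = (gtilde x - ghat x) * r x + ptilde x * (α - αtilde) := by
      rw [hp x, hpt x]; field_simp; ring
    have h1 : |(gtilde x - ghat x) * r x| ≤ |ghat x - gtilde x| := by
      rw [abs_mul, abs_sub_comm]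
      rcases hr x with ⟨h0, h1'⟩
      have hr1 : |r x| ≤ 1 := by rw [abs_le]; constructor <;> linarith
      nlinarith [abs_nonneg (ghat x - gtilde x), abs_nonneg (r x)]
    have h2 : |ptilde x * (α - αtilde)| = ptilde x * |α - αtilde| := by
      rw [abs_mul, abs_of_nonneg (hpt_nonneg x)]
    have heq : |ptilde x - p x| = |α * (ptilde x - p x)| / α := by
      rw [abs_mul, abs_of_pos hα0]
      field_simp
    rw [heq, hkey2]
    gcongr
    calc |(gtilde x - ghat x) * r x + ptilde x * (α - αtilde)|
        ≤ |(gtilde x - ghat x) * r x| + |ptilde x * (α - αtilde)| := abs_add_le _ _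
      _ ≤ |ghat x - gtilde x| + ptilde x * |α - αtilde| := by rw [h2]; linarith
  have hint_lhs : Integrable (fun x => |ptilde x - p x|) := (hpt_int.sub hp_int).abs
  have hint_rhs : Integrable
      (fun x => (|ghat x - gtilde x| + ptilde x * |α - αtilde|) / α) :=
    (hfabs_int.add (hpt_int.mul_const _)).div_const α
  have hpt1 : (∫ x, ptilde x * |α - αtilde|) = |α - αtilde| := by
    rw [integral_mul_const, hpt_dens, one_mul]
  calc (∫ x, |ptilde x - p x|)
      ≤ ∫ x, (|ghat x - gtilde x| + ptilde x * |α - αtilde|) / α :=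
        integral_mono hint_lhs hint_rhs hbound
    _ = ((∫ x, |ghat x - gtilde x|) + |α - αtilde|) / α := by
        rw [integral_div, integral_add hfabs_int (hpt_int.mul_const _), hpt1]
    _ ≤ 3 * ε := by
        rw [div_le_iff₀ hα0]
        nlinarith [hα_mem.2]
end

section
/- Let D and D̃ be probability distributions on {1,…,m} with D(i) = v_i·w_i/c and D̃(i) = ṽ_i·w_i/c̃, where w_i > 0 are fixed weights, c = ∑ v_i w_i, c̃ = ∑ ṽ_i w_i, and v_i/(1+δ) ≤ ṽ_i ≤ v_i(1+δ) for all i with 0 < δ ≤ 1. Then the total variation distance satisfies ∑_i |D(i) - D̃(i)| ≤ 3δ. -/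
theorem stmt18 (m : ℕ) (v vt w : Fin m → ℝ) (δ : ℝ)
    (hv : ∀ i, 0 < v i) (hvt : ∀ i, 0 < vt i) (hw : ∀ i, 0 < w i)
    (hδ : δ ∈ Set.Ioc (0 : ℝ) 1)
    (happrox : ∀ i, v i / (1 + δ) ≤ vt i ∧ vt i ≤ v i * (1 + δ)) :
    ∑ i, |v i * w i / (∑ j, v j * w j) - vt i * w i / (∑ j, vt j * w j)| ≤ 3 * δ := by
  obtain ⟨hδ0, hδ1⟩ := hδ
  rcases Nat.eq_zero_or_pos m with hm | hm
  · subst hm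
    simp
    linarith
  set c := ∑ j, v j * w j with hc
  set ct := ∑ j, vt j * w j with hct
  have hne : (Finset.univ : Finset (Fin m)).Nonempty := ⟨⟨0, hm⟩, Finset.mem_univ _⟩
  have hcpos : 0 < c := Finset.sum_pos (fun i _ => mul_pos (hv i) (hw i)) hne
  have hctpos : 0 < ct := Finset.sum_pos (fun i _ => mul_pos (hvt i) (hw i)) hne
  have h1δ : (0:ℝ) < 1 + δ := by linarith
  have key : ∀ i, |vt i * w i - v i * w i| ≤ δ * (v i * w i) := by
    intro i
    obtain ⟨h1, h2⟩ := happrox i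
    have hw' := hw i; have hv' := hv i
    have h1' : v i ≤ vt i * (1 + δ) := by
      rw [div_le_iff₀ h1δ] at h1; linarith
    have h3 : v i - vt i ≤ δ * v i := by
      rcases le_total (vt i) (v i) with h | h
      · nlinarith
      · nlinarith
    have h4 : vt i - v i ≤ δ * v i := by nlinarith
    rw [abs_le]
    constructor
    · nlinarith [mul_le_mul_of_nonneg_right h3 hw'.le]
    · nlinarith [mul_le_mul_of_nonneg_right h4 hw'.le]
  have hsum : ∑ i, |vt i * w i - v i * w i| ≤ δ * c := by
    rw [hc, Finset.mul_sum]
    exact Finset.sum_le_sum (fun i _ => key i)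
  have hcc : |ct - c| ≤ δ * c := by
    calc |ct - c| = |∑ i, (vt i * w i - v i * w i)| := by
          rw [Finset.sum_sub_distrib]
      _ ≤ ∑ i, |vt i * w i - v i * w i| := Finset.abs_sum_le_sum_abs _ _
      _ ≤ δ * c := hsum
  have point : ∀ i, |v i * w i / c - vt i * w i / ct| ≤
      |vt i * w i - v i * w i| / c + (vt i * w i / ct) * (|ct - c| / c) := by
    intro i
    have heq : v i * w i / c - vt i * w i / ct =
        (v i * w i - vt i * w i) / c + (vt i * w i) * (ct - c) / (ct * c) := by
      field_simp
      ring
    rw [heq]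
    refine (abs_add_le _ _).trans ?_
    have e1 : |(v i * w i - vt i * w i) / c| = |vt i * w i - v i * w i| / c := by
      rw [abs_div, abs_of_pos hcpos, abs_sub_comm]
    have e2 : |vt i * w i * (ct - c) / (ct * c)| = (vt i * w i / ct) * (|ct - c| / c) := by
      rw [abs_div, abs_mul, abs_of_pos (mul_pos (hvt i) (hw i)),
        abs_of_pos (mul_pos hctpos hcpos)]
      field_simp
    rw [e1, e2]
  calc ∑ i, |v i * w i / c - vt i * w i / ct|
      ≤ ∑ i, (|vt i * w i - v i * w i| / c + (vt i * w i / ct) * (|ct - c| / c)) :=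
        Finset.sum_le_sum (fun i _ => point i)
    _ = (∑ i, |vt i * w i - v i * w i|) / c + (∑ i, vt i * w i) / ct * (|ct - c| / c) := by
        rw [Finset.sum_add_distrib, ← Finset.sum_div]
        congr 1
        rw [Finset.sum_div, Finset.sum_mul]
    _ ≤ (δ * c) / c + ct / ct * ((δ * c) / c) := by
        gcongr
    _ = 2 * δ := by
        field_simp
        ring
    _ ≤ 3 * δ := by linarith
end
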